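/- Vanishing of the penalization's nonlocal gradient against the distance: Let N ≥ 1, 0 < s < 1 and 0 < α < s. Let η : ℝ → [0,∞) be a smooth even function, nondecreasing on [0,∞), with bounded first and second derivatives, such that η(r) = r² for |r| ≤ R for some R > 0 and η(r) ≤ C₀(1 + |r|^α) for all r. For w ∈ ℝ^N and ε > 0 define G(w,ε) = ( (c_{N,s}/2) ∫_{ℝ^N} (η(|w| ε^{−1/2}) − η(|z + w| ε^{−1/2}))² |z|^{−(N+2s)} dz )^{1/2}. Then there is c̃ > 0, depending only on N, s, α, C₀, R and the derivative bounds of η, such that for any family (w_ε)_{ε>0} in ℝ^N with |w_ε|²/ε → 0 as ε → 0⁺ one has G(w_ε, ε) ≤ c̃ ε^{−s/2} for all sufficiently small ε, and consequently |w_ε| · G(w_ε, ε) → 0 as ε → 0⁺. -/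

import Mathlib

open MeasureTheory Filter Topology

noncomputable section

abbrev Euc (N : ℕ) := EuclideanSpace ℝ (Fin N)

/-- `G(w,ε)`: the nonlocal gradient at `x₀` of the penalization test function
`x ↦ η(|x - y₀| ε^{-1/2})`, with `w = x₀ - y₀`. -/
def Gpen (N : ℕ) (c s : ℝ) (η : ℝ → ℝ) (w : Euc N) (ε : ℝ) : ℝ :=
  Real.sqrt ((c / 2) * ∫ z : Euc N,
    (η (‖w‖ / Real.sqrt ε) - η (‖z + w‖ / Real.sqrt ε)) ^ 2 / ‖z‖ ^ ((N : ℝ) + 2 * s))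

/-- Radial profile used to dominate the penalization integrand. -/
def Fprof (A B α p u : ℝ) : ℝ := (if u ≤ 1 then A * u ^ (2:ℝ) else B * u ^ (2*α)) / u ^ p

set_option maxHeartbeats 1000000 in
/-- A function of the norm is integrable w.r.t. an additive Haar measure provided the
corresponding radial profile (weighted by `y ^ (dim - 1)`) is integrable on `(0, ∞)`. -/
lemma integrable_comp_norm_aux {E : Type*} [NormedAddCommGroup E] [NormedSpace ℝ E]
    [MeasurableSpace E] [BorelSpace E] [FiniteDimensional ℝ E] [Nontrivial E]
    (μ : Measure E) [μ.IsAddHaarMeasure] {f : ℝ → ℝ} (hm : Measurable f)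
    (h : IntegrableOn (fun y : ℝ => f y * y ^ (Module.finrank ℝ E - 1)) (Set.Ioi 0)) :
    Integrable (fun x => f ‖x‖) μ := by
  set n := Module.finrank ℝ E - 1 with hn
  have h1 : Integrable (fun y : Set.Ioi (0:ℝ) => f y * (y:ℝ) ^ n)
      (Measure.comap Subtype.val (volume : Measure ℝ)) := by
    have hiff := (MeasurableEmbedding.subtype_coe
      (measurableSet_Ioi (a := (0:ℝ)))).integrable_map_iff
      (g := fun y : ℝ => f y * y ^ n) (μ := Measure.comap Subtype.val volume)
    rw [map_comap_subtype_coe measurableSet_Ioi] at hiff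
    exact hiff.mp h
  have h2 : Integrable (fun y : Set.Ioi (0:ℝ) => f y) (Measure.volumeIoiPow n) := by
    rw [Measure.volumeIoiPow, integrable_withDensity_iff
      ((measurable_subtype_coe.pow_const n).ennreal_ofReal)
      (Eventually.of_forall fun _ => ENNReal.ofReal_lt_top)]
    refine h1.congr (ae_of_all _ fun y => ?_)
    simp [ENNReal.toReal_ofReal (pow_nonneg (le_of_lt y.2) n)]
  have h3 : Integrable (fun q : Metric.sphere (0:E) 1 × Set.Ioi (0:ℝ) => f q.2)
      (μ.toSphere.prod (Measure.volumeIoiPow n)) := by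
    simpa using (integrable_const (1:ℝ)).mul_prod h2
  have h4 := ((μ.measurePreserving_homeomorphUnitSphereProd).integrable_comp
      ((hm.comp (measurable_subtype_coe.comp measurable_snd)).aestronglyMeasurable)).2 h3
  have h5 : Integrable (fun x : ({0}ᶜ : Set E) => f ‖(x:E)‖) (μ.comap Subtype.val) := by
    refine h4.congr (ae_of_all _ fun x => ?_)
    simp [Function.comp]
  have h6 := (MeasurableEmbedding.subtype_coe
      ((measurableSet_singleton (0:E)).compl)).integrable_map_iff
      (g := fun x : E => f ‖x‖) (μ := Measure.comap Subtype.val μ)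
  rw [map_comap_subtype_coe (measurableSet_singleton (0:E)).compl,
    restrict_compl_singleton] at h6
  exact h6.mpr h5

set_option maxHeartbeats 2000000 in
/-- Vanishing of the penalization's nonlocal gradient against the distance: there is
`c̃ > 0`, depending only on the data, such that for any family `(w_ε)` with
`|w_ε|²/ε → 0` one has `G(w_ε, ε) ≤ c̃ ε^{-s/2}` for small `ε`, and hence
`|w_ε| · G(w_ε, ε) → 0` as `ε → 0⁺`. -/
theorem penalization_gradient_vanishing
    (N : ℕ) (hN : 1 ≤ N) (s α : ℝ) (hs0 : 0 < s) (hs1 : s < 1)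
    (hα0 : 0 < α) (hαs : α < s) (c : ℝ) (hc : 0 < c)
    (η : ℝ → ℝ) (hηsm : ContDiff ℝ (⊤ : ℕ∞) η) (hηnn : ∀ r, 0 ≤ η r)
    (hηeven : ∀ r, η (-r) = η r) (hηmono : MonotoneOn η (Set.Ici 0))
    (hηd1 : ∃ M, ∀ r, |deriv η r| ≤ M) (hηd2 : ∃ M, ∀ r, |deriv (deriv η) r| ≤ M)
    (R : ℝ) (hR : 0 < R) (hηsq : ∀ r : ℝ, |r| ≤ R → η r = r ^ 2)
    (C₀ : ℝ) (hC₀ : 0 < C₀) (hηgrow : ∀ r : ℝ, η r ≤ C₀ * (1 + |r| ^ α)) :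
    ∃ ctil > 0, ∀ w : ℝ → Euc N,
      Tendsto (fun ε => ‖w ε‖ ^ 2 / ε) (𝓝[>] (0:ℝ)) (𝓝 0) →
      (∀ᶠ ε in 𝓝[>] (0:ℝ), Gpen N c s η (w ε) ε ≤ ctil * ε ^ (-(s / 2))) ∧
      Tendsto (fun ε => ‖w ε‖ * Gpen N c s η (w ε) ε) (𝓝[>] (0:ℝ)) (𝓝 0) := by
  classical
  obtain ⟨M₁, hM₁⟩ := hηd1
  have hM₁0 : 0 ≤ M₁ := (abs_nonneg _).trans (hM₁ 0)
  set p : ℝ := (N:ℝ) + 2 * s with hp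
  have hppos : 0 < p := by
    have h1 : (1:ℝ) ≤ (N:ℝ) := by exact_mod_cast hN
    nlinarith
  set A : ℝ := M₁ ^ 2 with hA
  set B : ℝ := 25 * C₀ ^ 2 with hB
  have hA0 : 0 ≤ A := sq_nonneg _
  have hB0 : 0 ≤ B := by positivity
  -- nonnegativity of the radial profile
  have hFnn : ∀ u : ℝ, 0 ≤ u → 0 ≤ Fprof A B α p u := by
    intro u hu
    unfold Fprof
    split_ifs with h
    · exact div_nonneg (mul_nonneg hA0 (Real.rpow_nonneg hu _)) (Real.rpow_nonneg hu _)
    · exact div_nonneg (mul_nonneg hB0 (Real.rpow_nonneg hu _)) (Real.rpow_nonneg hu _)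
  -- Lipschitz estimate from the derivative bound
  have hlip : ∀ a b : ℝ, |η a - η b| ≤ M₁ * |a - b| := by
    intro a b
    have hd : Differentiable ℝ η := hηsm.differentiable (by simp)
    have hl : LipschitzWith (Real.toNNReal M₁) η := by
      refine lipschitzWith_of_nnnorm_deriv_le hd fun x => ?_
      rw [← NNReal.coe_le_coe, Real.coe_toNNReal _ hM₁0]
      simpa [Real.norm_eq_abs] using hM₁ x
    have := hl.dist_le_mul a b
    simpa [Real.dist_eq, Real.coe_toNNReal _ hM₁0] using this
  -- square-root of the power
  have hsq : ∀ ε : ℝ, 0 < ε → Real.sqrt (ε ^ (-s)) = ε ^ (-(s/2)) := by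
    intro ε hε
    rw [show -s = -(s/2) * 2 by ring, Real.rpow_mul hε.le, Real.rpow_two,
      Real.sqrt_sq (Real.rpow_nonneg hε.le _)]
  -- the main pointwise bound
  have hpt : ∀ ⦃ε : ℝ⦄, 0 < ε → ∀ ⦃v : Euc N⦄, ‖v‖ ≤ Real.sqrt ε → ∀ z : Euc N,
      (η (‖v‖ / Real.sqrt ε) - η (‖z + v‖ / Real.sqrt ε)) ^ 2 / ‖z‖ ^ p
        ≤ Real.sqrt ε ^ (-p) * Fprof A B α p (‖z‖ / Real.sqrt ε) := by
    intro ε hε v hv z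
    set r := Real.sqrt ε with hrdef
    have hr : 0 < r := Real.sqrt_pos.2 hε
    rcases eq_or_ne z 0 with rfl | hz
    · rw [zero_add, sub_self, norm_zero, Real.zero_rpow hppos.ne',
        zero_pow (by norm_num), zero_div]
      exact mul_nonneg (Real.rpow_nonneg hr.le _) (hFnn _ (by positivity))
    · have hz0 : 0 < ‖z‖ := norm_pos_iff.2 hz
      set t := ‖z‖ / r with htdef
      have ht0 : 0 < t := div_pos hz0 hr
      have hnum : (η (‖v‖ / r) - η (‖z + v‖ / r)) ^ 2
          ≤ (if t ≤ 1 then A * t ^ (2:ℝ) else B * t ^ (2*α)) := by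
        split_ifs with h1
        · -- Lipschitz regime
          have hab : |‖v‖ / r - ‖z + v‖ / r| ≤ t := by
            rw [div_sub_div_same, abs_div, abs_of_pos hr, htdef]
            refine div_le_div_of_nonneg_right ?_ hr.le
            have h2 := abs_norm_sub_norm_le v (z + v)
            have h3 : v - (z + v) = -z := by abel
            rwa [h3, norm_neg] at h2
          have h4 : |η (‖v‖ / r) - η (‖z + v‖ / r)| ≤ M₁ * t := by
            refine (hlip _ _).trans ?_
            exact mul_le_mul_of_nonneg_left hab hM₁0
          calc (η (‖v‖ / r) - η (‖z + v‖ / r)) ^ 2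
              = |η (‖v‖ / r) - η (‖z + v‖ / r)| ^ 2 := (sq_abs _).symm
            _ ≤ (M₁ * t) ^ 2 := pow_le_pow_left₀ (abs_nonneg _) h4 2
            _ = A * t ^ (2:ℝ) := by rw [Real.rpow_two, hA]; ring
        · -- growth regime
          have h1' : 1 < t := lt_of_not_ge h1
          have ha0 : 0 ≤ ‖v‖ / r := by positivity
          have ha1 : ‖v‖ / r ≤ 1 := (div_le_one hr).2 hv
          have hX : η (‖v‖ / r) ≤ 2 * C₀ := by
            have := hηgrow (‖v‖ / r)
            have h5 : |‖v‖ / r| ^ α ≤ 1 :=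
              Real.rpow_le_one (abs_nonneg _) (by rwa [abs_of_nonneg ha0]) hα0.le
            nlinarith
          have hT1 : (1:ℝ) ≤ t ^ α := Real.one_le_rpow h1'.le hα0.le
          have hb0 : 0 ≤ ‖z + v‖ / r := by positivity
          have hbt : ‖z + v‖ / r ≤ 2 * t := by
            have h5 : ‖z + v‖ ≤ ‖z‖ + ‖v‖ := norm_add_le _ _
            have h6 : ‖z + v‖ ≤ ‖z‖ + r := by linarith
            have h7 : ‖z + v‖ / r ≤ (‖z‖ + r) / r :=
              div_le_div_of_nonneg_right h6 hr.le
            have h8 : (‖z‖ + r) / r = t + 1 := by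
              rw [htdef]; field_simp
            rw [h8] at h7
            linarith
          have hY : η (‖z + v‖ / r) ≤ 3 * C₀ * t ^ α := by
            have h5 := hηgrow (‖z + v‖ / r)
            have h6 : |‖z + v‖ / r| ^ α ≤ (2 * t) ^ α := by
              refine Real.rpow_le_rpow (abs_nonneg _) ?_ hα0.le
              rwa [abs_of_nonneg hb0]
            have h7 : (2 * t) ^ α = 2 ^ α * t ^ α :=
              Real.mul_rpow (by norm_num) ht0.le
            have h8 : (2:ℝ) ^ α ≤ 2 := by
              calc (2:ℝ) ^ α ≤ 2 ^ (1:ℝ) :=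
                    Real.rpow_le_rpow_of_exponent_le one_le_two (by linarith)
                _ = 2 := Real.rpow_one 2
            have h9 : 2 ^ α * t ^ α ≤ 2 * t ^ α := by nlinarith
            nlinarith
          have hXt : η (‖v‖ / r) ≤ 2 * C₀ * t ^ α := by nlinarith
          have hsum : η (‖v‖ / r) + η (‖z + v‖ / r) ≤ 5 * C₀ * t ^ α := by linarith
          have hsq2 : (η (‖v‖ / r) - η (‖z + v‖ / r)) ^ 2
              ≤ (η (‖v‖ / r) + η (‖z + v‖ / r)) ^ 2 := by
            nlinarith [mul_nonneg (hηnn (‖v‖ / r)) (hηnn (‖z + v‖ / r))]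
          have hsq3 : (η (‖v‖ / r) + η (‖z + v‖ / r)) ^ 2 ≤ (5 * C₀ * t ^ α) ^ 2 :=
            pow_le_pow_left₀ (add_nonneg (hηnn _) (hηnn _)) hsum 2
          have ht2α : t ^ (2*α) = (t ^ α) ^ 2 := by
            rw [show 2*α = α*2 by ring, Real.rpow_mul ht0.le, Real.rpow_two]
          calc (η (‖v‖ / r) - η (‖z + v‖ / r)) ^ 2
              ≤ (5 * C₀ * t ^ α) ^ 2 := hsq2.trans hsq3
            _ = B * t ^ (2*α) := by rw [ht2α, hB]; ring
      have hrp : 0 < r ^ p := Real.rpow_pos_of_pos hr _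
      have htp : 0 < t ^ p := Real.rpow_pos_of_pos ht0 _
      have hden : ‖z‖ ^ p = r ^ p * t ^ p := by
        rw [← Real.mul_rpow hr.le ht0.le]
        congr 1
        rw [htdef, mul_comm, div_mul_cancel₀ _ hr.ne']
      unfold Fprof
      calc (η (‖v‖ / r) - η (‖z + v‖ / r)) ^ 2 / ‖z‖ ^ p
          = (η (‖v‖ / r) - η (‖z + v‖ / r)) ^ 2 / (r ^ p * t ^ p) := by rw [hden]
        _ ≤ (if t ≤ 1 then A * t ^ (2:ℝ) else B * t ^ (2*α)) / (r ^ p * t ^ p) :=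
            div_le_div_of_nonneg_right hnum (by positivity)
        _ = r ^ (-p) * ((if t ≤ 1 then A * t ^ (2:ℝ) else B * t ^ (2*α)) / t ^ p) := by
            rw [Real.rpow_neg hr.le]
            field_simp
  -- nontriviality of the space
  haveI : Nontrivial (Euc N) := by
    refine ⟨EuclideanSpace.single ⟨0, hN⟩ (1:ℝ), 0, fun h => ?_⟩
    have h2 := congrArg (fun x : Euc N => x ⟨0, hN⟩) h
    simp [EuclideanSpace.single_apply] at h2
  have hd : Module.finrank ℝ (Euc N) = N := finrank_euclideanSpace_fin
  have hd1 : ((Module.finrank ℝ (Euc N) - 1 : ℕ) : ℝ) = (N:ℝ) - 1 := by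
    rw [hd, Nat.cast_sub hN, Nat.cast_one]
  -- measurability of the radial profile
  have hFmeas : Measurable (Fprof A B α p) := by
    unfold Fprof
    apply Measurable.div
    · exact Measurable.ite measurableSet_Iic
        (measurable_const.mul (measurable_id.pow_const _))
        (measurable_const.mul (measurable_id.pow_const _))
    · exact measurable_id.pow_const _
  -- integrability of the weighted radial profile over (0, ∞)
  have hcomb : ∀ y : ℝ, 0 < y → ∀ K e : ℝ,
      K * y ^ e / y ^ p * y ^ (Module.finrank ℝ (Euc N) - 1)
        = K * y ^ (e + ((N:ℝ) - 1) - p) := by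
    intro y hy K e
    rw [← Real.rpow_natCast y (Module.finrank ℝ (Euc N) - 1), hd1,
      div_mul_eq_mul_div, mul_assoc, ← Real.rpow_add hy, mul_div_assoc,
      ← Real.rpow_sub hy]
  have hrad : IntegrableOn
      (fun y : ℝ => Fprof A B α p y * y ^ (Module.finrank ℝ (Euc N) - 1))
      (Set.Ioi 0) := by
    rw [show Set.Ioi (0:ℝ) = Set.Ioc 0 1 ∪ Set.Ioi 1 from
      (Set.Ioc_union_Ioi_eq_Ioi zero_le_one).symm]
    apply IntegrableOn.union
    · have base : IntegrableOn (fun y : ℝ => A * y ^ (1 - 2*s)) (Set.Ioc 0 1) := by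
        have h1 : IntervalIntegrable (fun y : ℝ => y ^ (1 - 2*s)) volume 0 1 :=
          intervalIntegral.intervalIntegrable_rpow' (by linarith)
        rw [intervalIntegrable_iff_integrableOn_Ioc_of_le zero_le_one] at h1
        exact h1.const_mul A
      refine base.congr_fun (fun y hy => ?_) measurableSet_Ioc
      have hy0 : 0 < y := hy.1
      show A * y ^ (1 - 2*s) = Fprof A B α p y * y ^ (Module.finrank ℝ (Euc N) - 1)
      unfold Fprof
      rw [if_pos hy.2, hcomb y hy0 A (2:ℝ),
        show (2:ℝ) + ((N:ℝ) - 1) - p = 1 - 2*s from by rw [hp]; ring]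
    · have base : IntegrableOn (fun y : ℝ => B * y ^ (2*α - 2*s - 1)) (Set.Ioi 1) := by
        have h1 : IntegrableOn (fun y : ℝ => y ^ (2*α - 2*s - 1)) (Set.Ioi 1) :=
          integrableOn_Ioi_rpow_of_lt (by linarith) one_pos
        exact h1.const_mul B
      refine base.congr_fun (fun y hy => ?_) measurableSet_Ioi
      have hy1 : 1 < y := hy
      have hy0 : 0 < y := lt_trans one_pos hy1
      show B * y ^ (2*α - 2*s - 1) = Fprof A B α p y * y ^ (Module.finrank ℝ (Euc N) - 1)
      unfold Fprof
      rw [if_neg (not_le.2 hy1), hcomb y hy0 B (2*α),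
        show 2*α + ((N:ℝ) - 1) - p = 2*α - 2*s - 1 from by rw [hp]; ring]
  -- integrability of the dominating function on Euc N
  have hg₁ : Integrable (fun y : Euc N => Fprof A B α p ‖y‖) :=
    integrable_comp_norm_aux volume hFmeas hrad
  set I : ℝ := ∫ y : Euc N, Fprof A B α p ‖y‖ with hI
  have hI0 : 0 ≤ I := integral_nonneg fun y => hFnn _ (norm_nonneg y)
  -- the key bound on Gpen
  have hkey : ∀ ⦃ε : ℝ⦄, 0 < ε → ∀ ⦃v : Euc N⦄, ‖v‖ ≤ Real.sqrt ε →
      Gpen N c s η v ε ≤ Real.sqrt (c/2 * I) * ε ^ (-(s/2)) := by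
    intro ε hε v hv
    set r := Real.sqrt ε with hrdef
    have hr : 0 < r := Real.sqrt_pos.2 hε
    have hint_g : Integrable (fun z : Euc N => r ^ (-p) * Fprof A B α p ‖r⁻¹ • z‖) :=
      (hg₁.comp_smul (inv_ne_zero hr.ne')).const_mul _
    have hsmul : ∀ z : Euc N, ‖r⁻¹ • z‖ = ‖z‖ / r := by
      intro z
      rw [norm_smul, norm_inv, Real.norm_eq_abs, abs_of_pos hr, inv_mul_eq_div]
    have hmono : (∫ z : Euc N, (η (‖v‖ / r) - η (‖z + v‖ / r)) ^ 2 / ‖z‖ ^ p)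
        ≤ ∫ z : Euc N, r ^ (-p) * Fprof A B α p ‖r⁻¹ • z‖ := by
      refine integral_mono_of_nonneg (ae_of_all _ fun z => ?_) hint_g
        (ae_of_all _ fun z => ?_)
      · dsimp only
        have := Real.rpow_nonneg (norm_nonneg z) p
        positivity
      · dsimp only
        rw [hsmul z]
        exact hpt hε hv z
    have hval : (∫ z : Euc N, r ^ (-p) * Fprof A B α p ‖r⁻¹ • z‖) = ε ^ (-s) * I := by
      rw [integral_const_mul]
      rw [show (fun z : Euc N => Fprof A B α p ‖r⁻¹ • z‖)
          = fun z : Euc N => (fun y : Euc N => Fprof A B α p ‖y‖) (r⁻¹ • z) from rfl]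
      rw [Measure.integral_comp_smul volume (fun y : Euc N => Fprof A B α p ‖y‖) r⁻¹]
      rw [smul_eq_mul, ← hI, inv_pow, inv_inv, abs_of_pos (pow_pos hr _), hd]
      rw [← mul_assoc]
      congr 1
      rw [← Real.rpow_natCast r N, ← Real.rpow_add hr]
      rw [hrdef, Real.sqrt_eq_rpow, ← Real.rpow_mul hε.le]
      congr 1
      rw [hp]; ring
    have hfinal : (c/2) * (∫ z : Euc N,
        (η (‖v‖ / r) - η (‖z + v‖ / r)) ^ 2 / ‖z‖ ^ p) ≤ c/2 * I * ε ^ (-s) := by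
      have := hmono.trans_eq hval
      nlinarith [Real.rpow_nonneg hε.le (-s)]
    have : Gpen N c s η v ε = Real.sqrt ((c/2) * ∫ z : Euc N,
        (η (‖v‖ / r) - η (‖z + v‖ / r)) ^ 2 / ‖z‖ ^ p) := by
      rw [Gpen, hp, hrdef]
    rw [this]
    calc Real.sqrt ((c/2) * ∫ z : Euc N,
          (η (‖v‖ / r) - η (‖z + v‖ / r)) ^ 2 / ‖z‖ ^ p)
        ≤ Real.sqrt (c/2 * I * ε ^ (-s)) := Real.sqrt_le_sqrt hfinal
      _ = Real.sqrt (c/2 * I) * Real.sqrt (ε ^ (-s)) := Real.sqrt_mul (by positivity) _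
      _ = Real.sqrt (c/2 * I) * ε ^ (-(s/2)) := by rw [hsq ε hε]
  -- conclusion
  refine ⟨Real.sqrt (c/2 * I) + 1, by positivity, fun w hw => ?_⟩
  have hev : ∀ᶠ ε in 𝓝[>] (0:ℝ), 0 < ε ∧ ‖w ε‖ ≤ Real.sqrt ε := by
    have h1 : ∀ᶠ ε in 𝓝[>] (0:ℝ), ‖w ε‖ ^ 2 / ε < 1 :=
      hw.eventually (eventually_lt_nhds one_pos)
    filter_upwards [h1, self_mem_nhdsWithin] with ε h2 h3
    have hε : 0 < ε := h3
    refine ⟨hε, ?_⟩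
    rw [Real.le_sqrt (norm_nonneg _) hε.le]
    have := (div_lt_one hε).1 h2
    linarith
  have hbound : ∀ᶠ ε in 𝓝[>] (0:ℝ),
      Gpen N c s η (w ε) ε ≤ (Real.sqrt (c/2 * I) + 1) * ε ^ (-(s/2)) := by
    filter_upwards [hev] with ε hε
    obtain ⟨h1, h2⟩ := hε
    have h3 := hkey h1 h2
    have h4 : 0 < ε ^ (-(s/2)) := Real.rpow_pos_of_pos h1 _
    nlinarith
  refine ⟨hbound, ?_⟩
  -- the squeeze for the second limit
  have hU : Tendsto (fun ε : ℝ => (Real.sqrt (c/2 * I) + 1) *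
      Real.sqrt (‖w ε‖ ^ 2 / ε * ε ^ (1 - s))) (𝓝[>] (0:ℝ)) (𝓝 0) := by
    have h2 : Tendsto (fun ε : ℝ => ε ^ (1 - s)) (𝓝[>] (0:ℝ)) (𝓝 0) := by
      have h3 := (Real.continuousAt_rpow_const 0 (1 - s) (Or.inr (by linarith))).tendsto
      rw [Real.zero_rpow (by linarith : (1:ℝ) - s ≠ 0)] at h3
      exact h3.mono_left nhdsWithin_le_nhds
    have h3 : Tendsto (fun ε : ℝ => ‖w ε‖ ^ 2 / ε * ε ^ (1 - s)) (𝓝[>] (0:ℝ)) (𝓝 0) := by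
      simpa using hw.mul h2
    have h4 : Tendsto (fun x : ℝ => (Real.sqrt (c/2 * I) + 1) * Real.sqrt x)
        (𝓝 0) (𝓝 0) := by
      have h5 := (Real.continuous_sqrt.tendsto 0).const_mul (Real.sqrt (c/2 * I) + 1)
      simpa using h5
    exact h4.comp h3
  refine tendsto_of_tendsto_of_tendsto_of_le_of_le' tendsto_const_nhds hU ?_ ?_
  · exact Eventually.of_forall fun ε => mul_nonneg (norm_nonneg _) (Real.sqrt_nonneg _)
  · filter_upwards [hev, hbound] with ε hε hb
    obtain ⟨h1, h2⟩ := hε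
    have heq : Real.sqrt (‖w ε‖ ^ 2 / ε * ε ^ (1 - s)) = ‖w ε‖ * ε ^ (-(s/2)) := by
      have h5 : ‖w ε‖ ^ 2 / ε * ε ^ (1 - s) = ‖w ε‖ ^ 2 * ε ^ (-s) := by
        rw [show (1:ℝ) - s = 1 + -s from by ring, Real.rpow_add h1, Real.rpow_one]
        field_simp
      rw [h5, Real.sqrt_mul (sq_nonneg _), Real.sqrt_sq (norm_nonneg _), hsq ε h1]
    rw [heq]
    calc ‖w ε‖ * Gpen N c s η (w ε) ε
        ≤ ‖w ε‖ * ((Real.sqrt (c/2 * I) + 1) * ε ^ (-(s/2))) :=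
          mul_le_mul_of_nonneg_left hb (norm_nonneg _)
      _ = (Real.sqrt (c/2 * I) + 1) * (‖w ε‖ * ε ^ (-(s/2))) := by ring
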